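/- Uniform generalization bound: for i.i.d. samples z₁,…,z_N ∼ μ and any δ ∈ (0,1), with probability at least 1 − δ, simultaneously for all g ∈ ι: L(g) ≤ L_N(g)(z) + 2·C(N) + √( log(1/δ) / (2N) ). -/

import Mathlib

open MeasureTheory

noncomputable section

variable {Z : Type*} [MeasurableSpace Z] {ι : Type*}

/-- The empirical loss of hypothesis `g` on the sample `z` of size `N`:
`L_N(g)(z) = (1/N) ∑ᵢ f g (z i)`. -/
def empLoss (f : ι → Z → ℝ) (N : ℕ) (g : ι) (z : Fin N → Z) : ℝ :=
  (1 / N) * ∑ i, f g (z i)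

/-- The expected loss of hypothesis `g`: `L(g) = ∫ f g dμ`. -/
def expLoss (μ : Measure Z) (f : ι → Z → ℝ) (g : ι) : ℝ :=
  ∫ x, f g x ∂μ

/-- A Rademacher sign `±1` encoded by a Boolean. -/
def rsign (b : Bool) : ℝ := if b then 1 else -1

/-- The fair-coin measure on `Bool`, i.e. the distribution of one Rademacher sign. -/
def coinFlip : Measure Bool := (PMF.uniformOfFintype Bool).toMeasure

/-- The Rademacher complexity of the class `ι` (composed with the loss `f`) with `N` samples:
`C(N) = E_{z ~ μ^N, ξ ~ Unif{±1}^N} [ sup_{g ∈ ι} (1/N) ∑ᵢ ξᵢ f g (zᵢ) ]`. -/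
def radComplexity (μ : Measure Z) (f : ι → Z → ℝ) (N : ℕ) : ℝ :=
  ∫ p : (Fin N → Z) × (Fin N → Bool),
    ⨆ g : ι, (1 / N) * ∑ i, rsign (p.2 i) * f g (p.1 i)
    ∂((Measure.pi fun _ => μ).prod (Measure.pi fun _ => coinFlip))


/-!
The uniform deviation `Φ z = ⨆ g, (L g - L_N g z)` changes by at most `1 / N` when one sample
point is replaced, so by McDiarmid's inequality it exceeds its mean by `t` with probability at
most `exp (-2 N t²)`, which is `δ` for `t = √(log (1 / δ) / (2 N))`. McDiarmid's inequality follows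
by induction on the number of coordinates: integrating out the first coordinate splits
`Φ - 𝔼 Φ` into a fluctuation in that coordinate, sub-Gaussian by Hoeffding's lemma, plus a
function of the others, sub-Gaussian by induction.

The mean of `Φ` is at most `2 C(N)` by symmetrization: replacing `L g` by the empirical loss of
an independent ghost sample can only increase the expected supremum; exchanging the two samples
at the coordinates where a sign `ξ i` is `-1` preserves their joint law; and the resulting signed
supremum splits into two Rademacher suprema, one for `ξ` and one for `-ξ`.
-/

open ProbabilityTheory Real Function
open scoped NNReal

lemma bddAbove_range_of_abs_le {α : Type*} {u : α → ℝ} {C : ℝ} (h : ∀ a, |u a| ≤ C) :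
    BddAbove (Set.range u) :=
  ⟨C, Set.forall_mem_range.2 fun a => (abs_le.1 (h a)).2⟩

lemma abs_ciSup_le {α : Type*} [Nonempty α] {u : α → ℝ} {C : ℝ} (h : ∀ a, |u a| ≤ C) :
    |⨆ a, u a| ≤ C := by
  obtain ⟨a₀⟩ := ‹Nonempty α›
  rw [abs_le]
  exact ⟨(abs_le.1 (h a₀)).1.trans (le_ciSup (bddAbove_range_of_abs_le h) a₀),
    ciSup_le fun a => (abs_le.1 (h a)).2⟩

lemma exists_forall_mem_Icc_add_of_sub_le {α : Type*} [Nonempty α] {u : α → ℝ} {c : ℝ}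
    (h : ∀ x x', u x - u x' ≤ c) : ∃ a, ∀ x, u x ∈ Set.Icc a (a + c) := by
  obtain ⟨x₀⟩ := ‹Nonempty α›
  have hbdd : BddBelow (Set.range u) := ⟨u x₀ - c, by rintro - ⟨x, rfl⟩; linarith [h x₀ x]⟩
  refine ⟨⨅ x, u x, fun x => ⟨ciInf_le hbdd x, ?_⟩⟩
  have : u x - c ≤ ⨅ x', u x' := le_ciInf fun x' => by linarith [h x x']
  linarith

lemma one_div_mul_sum_mem_Icc {N : ℕ} (hN : 0 < N) {u : Fin N → ℝ} {a b : ℝ}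
    (hu : ∀ i, u i ∈ Set.Icc a b) : (1 / N) * ∑ i, u i ∈ Set.Icc a b := by
  have hN' : (0 : ℝ) < N := by exact_mod_cast hN
  have ha : N * a ≤ ∑ i, u i := by
    simpa using Finset.sum_le_sum (s := Finset.univ) fun i _ => (hu i).1
  have hb : ∑ i, u i ≤ N * b := by
    simpa using Finset.sum_le_sum (s := Finset.univ) fun i _ => (hu i).2
  rw [one_div_mul_eq_div, Set.mem_Icc, le_div_iff₀ hN', div_le_iff₀ hN']
  constructor <;> linarith

lemma Measurable.integrable_of_abs_le {α : Type*} [MeasurableSpace α] {μ : Measure α}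
    [IsFiniteMeasure μ] {u : α → ℝ} (hu : Measurable u) {C : ℝ} (hC : ∀ x, |u x| ≤ C) :
    Integrable u μ :=
  .of_bound hu.aestronglyMeasurable C (ae_of_all _ fun x => (norm_eq_abs _).trans_le (hC x))

lemma abs_integral_le_of_abs_le {α : Type*} [MeasurableSpace α] {μ : Measure α}
    [IsProbabilityMeasure μ] {u : α → ℝ} {C : ℝ} (hC : ∀ x, |u x| ≤ C) :
    |∫ x, u x ∂μ| ≤ C := by
  simpa using norm_integral_le_of_norm_le_const (μ := μ)
    (ae_of_all _ fun x => (norm_eq_abs (u x)).trans_le (hC x))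

lemma ciSup_integral_le_integral_ciSup {α β : Type*} [MeasurableSpace α] {μ : Measure α}
    [IsFiniteMeasure μ] [Countable β] [Nonempty β] {u : β → α → ℝ} (hu : ∀ b, Measurable (u b))
    {C : ℝ} (hC : ∀ b x, |u b x| ≤ C) :
    ⨆ b, ∫ x, u b x ∂μ ≤ ∫ x, ⨆ b, u b x ∂μ :=
  ciSup_le fun b => integral_mono ((hu b).integrable_of_abs_le (hC b))
    ((Measurable.iSup hu).integrable_of_abs_le fun x => abs_ciSup_le fun b => hC b x)
    fun x => le_ciSup (bddAbove_range_of_abs_le fun b => hC b x) b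

lemma MeasureTheory.MeasurePreserving.integral_comp_of_measurable {α β : Type*}
    [MeasurableSpace α] [MeasurableSpace β] {μ : Measure α} {ν : Measure β} {φ : α → β}
    (hφ : MeasurePreserving φ μ ν) {u : β → ℝ} (hu : Measurable u) :
    ∫ x, u (φ x) ∂μ = ∫ y, u y ∂ν := by
  rw [← hφ.map_eq, integral_map hφ.measurable.aemeasurable hu.aestronglyMeasurable]

section BoundedDifferences

variable {Ω : Type*} [MeasurableSpace Ω]

lemma hasSubgaussianMGF_sub_integral_of_sub_le (μ : Measure Ω) [IsProbabilityMeasure μ]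
    {u : Ω → ℝ} (hu : Measurable u) {c : ℝ≥0} (h : ∀ x x', u x - u x' ≤ c) :
    HasSubgaussianMGF (fun x => u x - ∫ y, u y ∂μ) ((c / 2) ^ 2) μ := by
  have : Nonempty Ω := nonempty_of_isProbabilityMeasure μ
  obtain ⟨a, ha⟩ := exists_forall_mem_Icc_add_of_sub_le h
  simpa using hasSubgaussianMGF_of_mem_Icc hu.aemeasurable (ae_of_all μ ha)

lemma ProbabilityTheory.HasSubgaussianMGF.prod_add {Ω' : Type*} [MeasurableSpace Ω']
    {μ : Measure Ω} {ν : Measure Ω'} [SFinite μ] [SFinite ν] {W : Ω × Ω' → ℝ} {X : Ω' → ℝ}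
    {cW cX : ℝ≥0} (hW : ∀ y, HasSubgaussianMGF (fun x => W (x, y)) cW μ)
    (hX : HasSubgaussianMGF X cX ν)
    (hint : ∀ t, Integrable (fun p => exp (t * (W p + X p.2))) (μ.prod ν)) :
    HasSubgaussianMGF (fun p => W p + X p.2) (cW + cX) (μ.prod ν) := by
  refine ⟨hint, fun t => ?_⟩
  calc mgf (fun p => W p + X p.2) (μ.prod ν) t
      = ∫ y, exp (t * X y) * mgf (fun x => W (x, y)) μ t ∂ν := by
        simp only [mgf, integral_prod_symm _ (hint t), ← integral_const_mul, ← exp_add]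
        congr 1 with y
        congr 1 with x
        ring_nf
    _ ≤ ∫ y, exp (t * X y) * exp (cW * t ^ 2 / 2) ∂ν :=
        integral_mono_of_nonneg (ae_of_all _ fun y => mul_nonneg (exp_nonneg _) mgf_nonneg)
          ((hX.integrable_exp_mul t).mul_const _) (ae_of_all _ fun y =>
            mul_le_mul_of_nonneg_left ((hW y).mgf_le t) (exp_nonneg _))
    _ = mgf X ν t * exp (cW * t ^ 2 / 2) := integral_mul_const _ _
    _ ≤ exp (cX * t ^ 2 / 2) * exp (cW * t ^ 2 / 2) := by gcongr; exact hX.mgf_le t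
    _ = exp (↑(cW + cX) * t ^ 2 / 2) := by rw [← exp_add]; push_cast; ring_nf

lemma measurable_fin_cons {n : ℕ} :
    Measurable fun p : Ω × (Fin n → Ω) => (Fin.cons p.1 p.2 : Fin (n + 1) → Ω) := by
  convert (MeasurableEquiv.piFinSuccAbove (fun _ : Fin (n + 1) => Ω) 0).symm.measurable with p
  exact (Fin.insertNth_zero' _ _).symm

lemma integral_fin_cons_update_sub_le (μ : Measure Ω) [IsProbabilityMeasure μ] {n : ℕ}
    {Φ : (Fin (n + 1) → Ω) → ℝ} {C c : ℝ} (hΦm : Measurable Φ) (hΦb : ∀ z, |Φ z| ≤ C)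
    (hΦd : ∀ i z x, Φ (update z i x) - Φ z ≤ c) (i : Fin n) (y : Fin n → Ω) (x : Ω) :
    ∫ x', Φ (Fin.cons x' (update y i x)) ∂μ - ∫ x', Φ (Fin.cons x' y) ∂μ ≤ c := by
  have hint : ∀ y, Integrable (fun x' => Φ (Fin.cons x' y)) μ := fun y =>
    ((hΦm.comp measurable_fin_cons).comp measurable_prodMk_right).integrable_of_abs_le
      fun _ => hΦb _
  rw [← integral_sub (hint _) (hint _)]
  refine (integral_mono ((hint _).sub (hint _)) (integrable_const c) fun x' => ?_).trans_eq
    (by simp)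
  simpa [Fin.cons_update] using hΦd i.succ (Fin.cons x' y) x

theorem hasSubgaussianMGF_pi_sub_integral_of_boundedDifferences (μ : Measure Ω)
    [IsProbabilityMeasure μ] {c : ℝ≥0} :
    ∀ {n : ℕ} {Φ : (Fin n → Ω) → ℝ} {C : ℝ}, Measurable Φ → (∀ z, |Φ z| ≤ C) →
      (∀ i z x, Φ (update z i x) - Φ z ≤ c) →
      HasSubgaussianMGF (fun z => Φ z - ∫ w, Φ w ∂Measure.pi fun _ => μ) (n * (c / 2) ^ 2)
        (Measure.pi fun _ => μ)
  | 0, Φ, C, _, _, _ => by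
    have hconst : ∀ z, Φ z = Φ default := fun z => congrArg Φ (Subsingleton.elim _ _)
    simp [hconst]
  | n + 1, Φ, C, hΦm, hΦb, hΦd => by
    set P := Measure.pi fun _ : Fin n => μ
    set e := MeasurableEquiv.piFinSuccAbove (fun _ : Fin (n + 1) => Ω) 0
    have he : MeasurePreserving e (Measure.pi fun _ => μ) (μ.prod P) :=
      measurePreserving_piFinSuccAbove (fun _ => μ) 0
    have he_symm : ∀ p, e.symm p = Fin.cons p.1 p.2 := fun p => Fin.insertNth_zero' _ _
    have hcons : Measurable fun p : Ω × (Fin n → Ω) => Φ (Fin.cons p.1 p.2) :=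
      hΦm.comp measurable_fin_cons
    set F : (Fin n → Ω) → ℝ := fun y => ∫ x, Φ (Fin.cons x y) ∂μ
    have hFm : Measurable F := hcons.stronglyMeasurable.integral_prod_left'.measurable
    have hF := hasSubgaussianMGF_pi_sub_integral_of_boundedDifferences μ hFm
      (fun y => abs_integral_le_of_abs_le fun _ => hΦb _)
      (integral_fin_cons_update_sub_le μ hΦm hΦb hΦd)
    have hslice : ∀ y, HasSubgaussianMGF (fun x => Φ (Fin.cons x y) - F y) ((c / 2) ^ 2) μ :=
      fun y => hasSubgaussianMGF_sub_integral_of_sub_le μ (hcons.comp measurable_prodMk_right)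
        fun x x' => by simpa using hΦd 0 (Fin.cons x' y) x
    have hmean : ∫ w, Φ w ∂Measure.pi (fun _ => μ) = ∫ y, F y ∂P := by
      rw [← (he.symm e).integral_comp' Φ, integral_prod_symm (fun p => Φ (e.symm p))
        ((hΦm.comp e.symm.measurable).integrable_of_abs_le fun _ => hΦb _)]
      simp only [he_symm]
      rfl
    have hsum := HasSubgaussianMGF.prod_add (W := fun p => Φ (Fin.cons p.1 p.2) - F p.2)
        hslice hF fun t => by
      refine integrable_exp_mul_of_mem_Icc (a := -(2 * C)) (b := 2 * C)
        ((hcons.sub (hFm.comp measurable_snd)).add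
          ((hFm.comp measurable_snd).sub measurable_const)).aemeasurable
        (ae_of_all _ fun p => ?_)
      have h₁ := abs_le.mp (hΦb (Fin.cons p.1 p.2))
      have h₂ := abs_le.mp (abs_integral_le_of_abs_le (μ := P) fun y =>
        abs_integral_le_of_abs_le (μ := μ) fun x => hΦb (Fin.cons x y))
      constructor <;> linarith [h₁.1, h₁.2, h₂.1, h₂.2]
    rw [← he.map_eq] at hsum
    convert hsum.of_map he.measurable.aemeasurable using 1
    · ext z
      simp only [comp_apply, ← he_symm, e.symm_apply_apply, hmean]
      ring
    · push_cast
      ring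

theorem measure_sub_integral_ge_le_of_boundedDifferences (μ : Measure Ω)
    [IsProbabilityMeasure μ] {n : ℕ} {Φ : (Fin n → Ω) → ℝ} {C : ℝ} {c : ℝ≥0}
    (hΦm : Measurable Φ) (hΦb : ∀ z, |Φ z| ≤ C) (hΦd : ∀ i z x, Φ (update z i x) - Φ z ≤ c)
    {t : ℝ} (ht : 0 ≤ t) :
    (Measure.pi fun _ => μ).real {z | t ≤ Φ z - ∫ w, Φ w ∂Measure.pi fun _ => μ} ≤
      exp (-2 * t ^ 2 / (n * c ^ 2)) := by
  refine ((hasSubgaussianMGF_pi_sub_integral_of_boundedDifferences μ hΦm hΦb hΦd).measure_ge_le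
    ht).trans_eq ?_
  push_cast
  ring_nf

end BoundedDifferences

section Loss

variable {N : ℕ}

@[fun_prop]
lemma measurable_empLoss {f : ι → Z → ℝ} (hfm : ∀ g, Measurable (f g)) (g : ι) :
    Measurable (empLoss f N g) := by
  unfold empLoss
  fun_prop

lemma empLoss_mem_Icc {α : Type*} {f : ι → α → ℝ} (hf : ∀ g x, f g x ∈ Set.Icc (0 : ℝ) 1)
    (hN : 0 < N) (g : ι) (z : Fin N → α) : empLoss f N g z ∈ Set.Icc 0 1 :=
  one_div_mul_sum_mem_Icc hN fun i => hf g (z i)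

lemma abs_empLoss_sub_empLoss_le {α : Type*} {f : ι → α → ℝ}
    (hf : ∀ g x, f g x ∈ Set.Icc (0 : ℝ) 1) (hN : 0 < N) (g : ι) (y z : Fin N → α) :
    |empLoss f N g y - empLoss f N g z| ≤ 1 := by
  have h₁ := empLoss_mem_Icc hf hN g y
  have h₂ := empLoss_mem_Icc hf hN g z
  exact abs_le.2 ⟨by linarith [h₁.1, h₂.2], by linarith [h₁.2, h₂.1]⟩

lemma empLoss_sub_empLoss_update_le {α : Type*} {f : ι → α → ℝ}
    (hf : ∀ g x, f g x ∈ Set.Icc (0 : ℝ) 1) (g : ι) (z : Fin N → α) (i : Fin N) (x : α) :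
    empLoss f N g z - empLoss f N g (update z i x) ≤ 1 / N := by
  unfold empLoss
  rw [← mul_sub, ← Finset.sum_sub_distrib, Finset.sum_eq_single i
    (fun j _ hj => by simp [update_of_ne hj]) (by simp), update_self]
  have : f g (z i) - f g x ≤ 1 := by linarith [(hf g (z i)).2, (hf g x).1]
  have : (0 : ℝ) ≤ 1 / N := by positivity
  nlinarith

lemma expLoss_mem_Icc {μ : Measure Z} [IsProbabilityMeasure μ] {f : ι → Z → ℝ}
    (hfm : ∀ g, Measurable (f g)) (hf : ∀ g x, f g x ∈ Set.Icc (0 : ℝ) 1) (g : ι) :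
    expLoss μ f g ∈ Set.Icc 0 1 :=
  ⟨integral_nonneg fun x => (hf g x).1,
    (integral_mono (.of_mem_Icc 0 1 (hfm g).aemeasurable (ae_of_all _ (hf g)))
      (integrable_const 1) fun x => (hf g x).2).trans_eq (by simp)⟩

lemma integral_empLoss {μ : Measure Z} [IsProbabilityMeasure μ] {f : ι → Z → ℝ} (hN : 0 < N)
    {g : ι} (hg : Integrable (f g) μ) :
    ∫ z, empLoss f N g z ∂(Measure.pi fun _ => μ) = expLoss μ f g := by
  have hN' : (N : ℝ) ≠ 0 := by exact_mod_cast hN.ne'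
  have hint : ∀ i : Fin N, Integrable (fun z : Fin N → Z => f g (z i)) (Measure.pi fun _ => μ) :=
    fun i => by
      rw [← (measurePreserving_eval (fun _ => μ) i).map_eq] at hg
      exact hg.comp_measurable (measurable_pi_apply i)
  have hcomp : ∀ i : Fin N, ∫ z, f g (z i) ∂(Measure.pi fun _ => μ) = expLoss μ f g :=
    fun i => integral_comp_eval (μ := fun _ => μ) hg.aestronglyMeasurable
  simp only [empLoss, integral_const_mul, integral_finsetSum _ fun i _ => hint i, hcomp,
    Finset.sum_const, Finset.card_univ, Fintype.card_fin, nsmul_eq_mul]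
  field_simp

end Loss

def uniformDeviation (μ : Measure Z) (f : ι → Z → ℝ) (N : ℕ) (z : Fin N → Z) : ℝ :=
  ⨆ g, (expLoss μ f g - empLoss f N g z)

lemma measurable_uniformDeviation [Countable ι] {μ : Measure Z} {f : ι → Z → ℝ} {N : ℕ}
    (hfm : ∀ g, Measurable (f g)) : Measurable (uniformDeviation μ f N) :=
  .iSup fun g => measurable_const.sub (measurable_empLoss hfm g)

section UniformDeviation

variable {μ : Measure Z} [IsProbabilityMeasure μ] {f : ι → Z → ℝ} {N : ℕ}

lemma abs_expLoss_sub_empLoss_le (hfm : ∀ g, Measurable (f g))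
    (hf : ∀ g x, f g x ∈ Set.Icc (0 : ℝ) 1) (hN : 0 < N) (g : ι) (z : Fin N → Z) :
    |expLoss μ f g - empLoss f N g z| ≤ 1 := by
  have h₁ := expLoss_mem_Icc (μ := μ) hfm hf g
  have h₂ := empLoss_mem_Icc hf hN g z
  exact abs_le.2 ⟨by linarith [h₁.1, h₂.2], by linarith [h₁.2, h₂.1]⟩

lemma expLoss_sub_empLoss_le_uniformDeviation (hfm : ∀ g, Measurable (f g))
    (hf : ∀ g x, f g x ∈ Set.Icc (0 : ℝ) 1) (hN : 0 < N) (g : ι) (z : Fin N → Z) :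
    expLoss μ f g - empLoss f N g z ≤ uniformDeviation μ f N z :=
  le_ciSup (bddAbove_range_of_abs_le fun g => abs_expLoss_sub_empLoss_le hfm hf hN g z) g

lemma abs_uniformDeviation_le [Nonempty ι] (hfm : ∀ g, Measurable (f g))
    (hf : ∀ g x, f g x ∈ Set.Icc (0 : ℝ) 1) (hN : 0 < N) (z : Fin N → Z) :
    |uniformDeviation μ f N z| ≤ 1 :=
  abs_ciSup_le fun g => abs_expLoss_sub_empLoss_le hfm hf hN g z

lemma uniformDeviation_update_sub_le [Nonempty ι] (hfm : ∀ g, Measurable (f g))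
    (hf : ∀ g x, f g x ∈ Set.Icc (0 : ℝ) 1) (i : Fin N) (z : Fin N → Z) (x : Z) :
    uniformDeviation μ f N (update z i x) - uniformDeviation μ f N z ≤ 1 / N := by
  have hN : 0 < N := i.pos
  refine sub_le_iff_le_add.2 (ciSup_le fun g => ?_)
  linarith [empLoss_sub_empLoss_update_le hf g z i x,
    expLoss_sub_empLoss_le_uniformDeviation (μ := μ) hfm hf hN g z]

end UniformDeviation

instance : IsProbabilityMeasure coinFlip := PMF.toMeasure.isProbabilityMeasure _

lemma measurePreserving_not_coinFlip : MeasurePreserving not coinFlip coinFlip := by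
  refine ⟨.of_discrete, ?_⟩
  rw [coinFlip, PMF.toMeasure_map _ _ .of_discrete]
  congr 1
  ext b
  rw [PMF.map_apply, tsum_bool]
  cases b <;> simp [PMF.uniformOfFintype_apply]

def swapWhere {α n : Type*} (ξ : n → Bool) (p : (n → α) × (n → α)) : (n → α) × (n → α) :=
  (fun i => if ξ i then p.1 i else p.2 i, fun i => if ξ i then p.2 i else p.1 i)

lemma measurePreserving_swapWhere {α n : Type*} [MeasurableSpace α] [Fintype n]
    (μ : Measure α) [SigmaFinite μ] (ξ : n → Bool) :
    MeasurePreserving (swapWhere ξ) ((Measure.pi fun _ => μ).prod (Measure.pi fun _ => μ))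
      ((Measure.pi fun _ => μ).prod (Measure.pi fun _ => μ)) := by
  have hE := measurePreserving_arrowProdEquivProdArrow α α n (fun _ => μ) (fun _ => μ)
  have hcoord : ∀ b : Bool,
      MeasurePreserving (fun q : α × α => if b then q else q.swap) (μ.prod μ) (μ.prod μ) := by
    rintro (_ | _)
    · simpa using Measure.measurePreserving_swap
    · exact MeasurePreserving.id _
  have hσ := measurePreserving_pi (fun _ : n => μ.prod μ) (fun _ => μ.prod μ) fun i =>
    hcoord (ξ i)
  convert (hE.comp hσ).comp (hE.symm _) using 1
  ext p i <;> cases h : ξ i <;> simp [swapWhere, h, MeasurableEquiv.arrowProdEquivProdArrow,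
    Equiv.arrowProdEquivProdArrow]

def rademacherSup {α : Type*} (f : ι → α → ℝ) (N : ℕ) (z : Fin N → α) (ξ : Fin N → Bool) : ℝ :=
  ⨆ g, (1 / N) * ∑ i, rsign (ξ i) * f g (z i)

def ghostDeviation {α : Type*} (f : ι → α → ℝ) (N : ℕ) (p : (Fin N → α) × (Fin N → α)) : ℝ :=
  ⨆ g, (empLoss f N g p.2 - empLoss f N g p.1)

section Symmetrization

variable {N : ℕ}

lemma abs_one_div_mul_sum_rsign_mul_le {α : Type*} {f : ι → α → ℝ}
    (hf : ∀ g x, f g x ∈ Set.Icc (0 : ℝ) 1) (hN : 0 < N) (g : ι) (z : Fin N → α)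
    (ξ : Fin N → Bool) : |(1 / N) * ∑ i, rsign (ξ i) * f g (z i)| ≤ 1 := by
  refine abs_le.2 (one_div_mul_sum_mem_Icc hN fun i => ?_)
  have := hf g (z i)
  cases ξ i <;> simp only [rsign, Bool.false_eq_true, if_true, if_false, Set.mem_Icc] <;>
    constructor <;> linarith [this.1, this.2]

lemma le_rademacherSup {α : Type*} {f : ι → α → ℝ} (hf : ∀ g x, f g x ∈ Set.Icc (0 : ℝ) 1)
    (hN : 0 < N) (g : ι) (z : Fin N → α) (ξ : Fin N → Bool) :
    (1 / N) * ∑ i, rsign (ξ i) * f g (z i) ≤ rademacherSup f N z ξ :=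
  le_ciSup (bddAbove_range_of_abs_le fun g => abs_one_div_mul_sum_rsign_mul_le hf hN g z ξ) g

lemma abs_rademacherSup_le [Nonempty ι] {α : Type*} {f : ι → α → ℝ}
    (hf : ∀ g x, f g x ∈ Set.Icc (0 : ℝ) 1) (hN : 0 < N) (z : Fin N → α) (ξ : Fin N → Bool) :
    |rademacherSup f N z ξ| ≤ 1 :=
  abs_ciSup_le fun g => abs_one_div_mul_sum_rsign_mul_le hf hN g z ξ

lemma measurable_rademacherSup [Countable ι] {f : ι → Z → ℝ} (hfm : ∀ g, Measurable (f g)) :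
    Measurable fun p : (Fin N → Z) × (Fin N → Bool) => rademacherSup f N p.1 p.2 :=
  .iSup fun g => by fun_prop

lemma abs_ghostDeviation_le [Nonempty ι] {α : Type*} {f : ι → α → ℝ}
    (hf : ∀ g x, f g x ∈ Set.Icc (0 : ℝ) 1) (hN : 0 < N) (p : (Fin N → α) × (Fin N → α)) :
    |ghostDeviation f N p| ≤ 1 :=
  abs_ciSup_le fun g => abs_empLoss_sub_empLoss_le hf hN g p.2 p.1

lemma measurable_ghostDeviation [Countable ι] {f : ι → Z → ℝ} (hfm : ∀ g, Measurable (f g)) :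
    Measurable (ghostDeviation f N) :=
  .iSup fun g => by fun_prop

lemma ghostDeviation_swapWhere_le [Nonempty ι] {α : Type*} {f : ι → α → ℝ}
    (hf : ∀ g x, f g x ∈ Set.Icc (0 : ℝ) 1) (hN : 0 < N) (ξ : Fin N → Bool)
    (p : (Fin N → α) × (Fin N → α)) :
    ghostDeviation f N (swapWhere ξ p) ≤
      rademacherSup f N p.2 ξ + rademacherSup f N p.1 (fun i => !ξ i) := by
  refine ciSup_le fun g => ?_
  have hsplit : empLoss f N g (swapWhere ξ p).2 - empLoss f N g (swapWhere ξ p).1 =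
      (1 / N) * ∑ i, rsign (ξ i) * f g (p.2 i) + (1 / N) * ∑ i, rsign (!ξ i) * f g (p.1 i) := by
    simp only [empLoss, ← mul_sub, ← mul_add, ← Finset.sum_sub_distrib, ← Finset.sum_add_distrib]
    congr 1
    refine Finset.sum_congr rfl fun i _ => ?_
    cases h : ξ i <;> simp [swapWhere, rsign, h] <;> ring
  rw [hsplit]
  exact add_le_add (le_rademacherSup hf hN g _ _) (le_rademacherSup hf hN g _ _)

variable {μ : Measure Z} [IsProbabilityMeasure μ] [Countable ι] [Nonempty ι] {f : ι → Z → ℝ}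

lemma integral_uniformDeviation_le_integral_ghostDeviation (hfm : ∀ g, Measurable (f g))
    (hf : ∀ g x, f g x ∈ Set.Icc (0 : ℝ) 1) (hN : 0 < N) :
    ∫ z, uniformDeviation μ f N z ∂(Measure.pi fun _ => μ) ≤
      ∫ p, ghostDeviation f N p ∂((Measure.pi fun _ => μ).prod (Measure.pi fun _ => μ)) := by
  set P := Measure.pi fun _ : Fin N => μ
  have hG : Integrable (ghostDeviation f N) (P.prod P) :=
    (measurable_ghostDeviation hfm).integrable_of_abs_le (abs_ghostDeviation_le hf hN)
  have hL : ∀ g, Integrable (empLoss f N g) P := fun g =>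
    .of_mem_Icc 0 1 (measurable_empLoss hfm g).aemeasurable
      (ae_of_all _ (empLoss_mem_Icc hf hN g))
  rw [integral_prod _ hG]
  refine integral_mono ((measurable_uniformDeviation hfm).integrable_of_abs_le
    (abs_uniformDeviation_le hfm hf hN)) hG.integral_prod_left fun z => ?_
  calc uniformDeviation μ f N z = ⨆ g, ∫ y, (empLoss f N g y - empLoss f N g z) ∂P := by
        refine iSup_congr fun g => ?_
        rw [integral_sub (hL g) (integrable_const _), integral_empLoss hN
          (.of_mem_Icc 0 1 (hfm g).aemeasurable (ae_of_all _ (hf g)))]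
        simp
    _ ≤ ∫ y, ⨆ g, (empLoss f N g y - empLoss f N g z) ∂P :=
        ciSup_integral_le_integral_ciSup (fun g => by fun_prop) fun g y =>
          abs_empLoss_sub_empLoss_le hf hN g y z

lemma radComplexity_eq_integral_integral (hfm : ∀ g, Measurable (f g))
    (hf : ∀ g x, f g x ∈ Set.Icc (0 : ℝ) 1) (hN : 0 < N) :
    radComplexity μ f N = ∫ ξ, ∫ z, rademacherSup f N z ξ ∂(Measure.pi fun _ => μ)
      ∂(Measure.pi fun _ => coinFlip) := by
  unfold radComplexity
  exact integral_prod_symm (fun p => rademacherSup f N p.1 p.2)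
    ((measurable_rademacherSup hfm).integrable_of_abs_le fun p =>
      abs_rademacherSup_le hf hN p.1 p.2)

lemma integrable_rademacherSup (hfm : ∀ g, Measurable (f g))
    (hf : ∀ g x, f g x ∈ Set.Icc (0 : ℝ) 1) (hN : 0 < N) (ξ : Fin N → Bool) :
    Integrable (fun z => rademacherSup f N z ξ) (Measure.pi fun _ => μ) :=
  ((measurable_rademacherSup hfm).comp (f := fun z => (z, ξ)) (by fun_prop)).integrable_of_abs_le
    fun z => abs_rademacherSup_le hf hN z ξ

lemma integral_ghostDeviation_le (hfm : ∀ g, Measurable (f g))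
    (hf : ∀ g x, f g x ∈ Set.Icc (0 : ℝ) 1) (hN : 0 < N) (ξ : Fin N → Bool) :
    ∫ p, ghostDeviation f N p ∂((Measure.pi fun _ => μ).prod (Measure.pi fun _ => μ)) ≤
      ∫ z, rademacherSup f N z ξ ∂(Measure.pi fun _ => μ) +
        ∫ z, rademacherSup f N z (fun i => !ξ i) ∂(Measure.pi fun _ => μ) := by
  set P := Measure.pi fun _ : Fin N => μ
  have hR := integrable_rademacherSup (μ := μ) hfm hf hN
  calc ∫ p, ghostDeviation f N p ∂(P.prod P)
      = ∫ p, ghostDeviation f N (swapWhere ξ p) ∂(P.prod P) :=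
        ((measurePreserving_swapWhere μ ξ).integral_comp_of_measurable
          (measurable_ghostDeviation hfm)).symm
    _ ≤ ∫ p, (rademacherSup f N p.2 ξ + rademacherSup f N p.1 (fun i => !ξ i)) ∂(P.prod P) :=
        integral_mono (((measurable_ghostDeviation hfm).comp
          (measurePreserving_swapWhere μ ξ).measurable).integrable_of_abs_le
            fun p => abs_ghostDeviation_le hf hN _)
          (((hR ξ).comp_snd P).add ((hR _).comp_fst P))
          (ghostDeviation_swapWhere_le hf hN ξ)
    _ = _ := by
        rw [integral_add ((hR ξ).comp_snd P) ((hR _).comp_fst P),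
          integral_fun_snd (fun y => rademacherSup f N y ξ),
          integral_fun_fst (fun z => rademacherSup f N z fun i => !ξ i)]
        simp [P]

theorem integral_uniformDeviation_le (hfm : ∀ g, Measurable (f g))
    (hf : ∀ g x, f g x ∈ Set.Icc (0 : ℝ) 1) (hN : 0 < N) :
    ∫ z, uniformDeviation μ f N z ∂(Measure.pi fun _ => μ) ≤ 2 * radComplexity μ f N := by
  set P := Measure.pi fun _ : Fin N => μ
  set B := Measure.pi fun _ : Fin N => coinFlip
  set r : (Fin N → Bool) → ℝ := fun ξ => ∫ z, rademacherSup f N z ξ ∂P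
  have hnot : ∫ ξ, r (fun i => !ξ i) ∂B = ∫ ξ, r ξ ∂B :=
    (measurePreserving_pi _ _ fun _ => measurePreserving_not_coinFlip).integral_comp_of_measurable
      .of_discrete
  calc ∫ z, uniformDeviation μ f N z ∂P
      ≤ ∫ p, ghostDeviation f N p ∂(P.prod P) :=
        integral_uniformDeviation_le_integral_ghostDeviation hfm hf hN
    _ = ∫ _ξ, ∫ p, ghostDeviation f N p ∂(P.prod P) ∂B := by simp
    _ ≤ ∫ ξ, (r ξ + r (fun i => !ξ i)) ∂B :=
        integral_mono (integrable_const _) .of_finite (integral_ghostDeviation_le hfm hf hN)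
    _ = 2 * radComplexity μ f N := by
        rw [integral_add .of_finite .of_finite, hnot, radComplexity_eq_integral_integral hfm hf hN]
        ring

end Symmetrization

lemma measure_uniformDeviation_sub_integral_ge_le {μ : Measure Z} [IsProbabilityMeasure μ]
    [Nonempty ι] [Countable ι] {f : ι → Z → ℝ} (hfm : ∀ g, Measurable (f g))
    (hf : ∀ g x, f g x ∈ Set.Icc (0 : ℝ) 1) {N : ℕ} (hN : 0 < N) {δ : ℝ} (hδ₀ : 0 < δ)
    (hδ₁ : δ ≤ 1) :
    (Measure.pi fun _ => μ).real {z | √(log (1 / δ) / (2 * N)) ≤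
      uniformDeviation μ f N z - ∫ w, uniformDeviation μ f N w ∂Measure.pi fun _ => μ} ≤ δ := by
  have hN' : (0 : ℝ) < N := by exact_mod_cast hN
  have hlog : 0 ≤ log (1 / δ) := log_nonneg (by rw [le_div_iff₀ hδ₀]; linarith)
  refine (measure_sub_integral_ge_le_of_boundedDifferences μ (c := (N : ℝ≥0)⁻¹)
    (measurable_uniformDeviation hfm) (abs_uniformDeviation_le hfm hf hN)
    (fun i z x => by simpa using uniformDeviation_update_sub_le hfm hf i z x)
    (sqrt_nonneg _)).trans_eq ?_
  rw [sq_sqrt (by positivity)]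
  push_cast
  field_simp
  rw [one_div, log_inv, neg_neg, exp_log hδ₀]

/-- **Uniform generalization bound**: for i.i.d. samples `z ~ μ^{⊗N}` and `δ ∈ (0,1)`, with
probability at least `1 - δ`, simultaneously for all `g ∈ ι`,
`L(g) ≤ L_N(g)(z) + 2 C(N) + √(log(1/δ)/(2N))`. -/
theorem uniform_generalization_bound
    (μ : Measure Z) [IsProbabilityMeasure μ] [Countable ι] [Nonempty ι]
    (f : ι → Z → ℝ) (hmeas : ∀ g, Measurable (f g))
    (hbound : ∀ g x, f g x ∈ Set.Icc (0 : ℝ) 1)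
    (N : ℕ) (hN : 0 < N) (δ : ℝ) (hδ : δ ∈ Set.Ioo (0 : ℝ) 1) :
    (Measure.pi fun _ : Fin N => μ)
      {z | ∀ g : ι, expLoss μ f g ≤
        empLoss f N g z + 2 * radComplexity μ f N +
          Real.sqrt (Real.log (1 / δ) / (2 * N))}
      ≥ ENNReal.ofReal (1 - δ) := by
  set P := Measure.pi fun _ : Fin N => μ
  set Φ := uniformDeviation μ f N
  set E := {z | √(log (1 / δ) / (2 * N)) ≤ Φ z - ∫ w, Φ w ∂P}
  have hE : MeasurableSet E :=
    measurableSet_le measurable_const ((measurable_uniformDeviation hmeas).sub measurable_const)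
  have hsub : Eᶜ ⊆ {z | ∀ g : ι, expLoss μ f g ≤
      empLoss f N g z + 2 * radComplexity μ f N + √(log (1 / δ) / (2 * N))} := fun z hz g => by
    simp only [E, Set.mem_compl_iff, Set.mem_ofPred_eq, not_le] at hz
    linarith [expLoss_sub_empLoss_le_uniformDeviation (μ := μ) hmeas hbound hN g z,
      integral_uniformDeviation_le (μ := μ) hmeas hbound hN]
  calc ENNReal.ofReal (1 - δ) ≤ ENNReal.ofReal (P.real Eᶜ) := by
        rw [probReal_compl_eq_one_sub hE]
        gcongr
        exact measure_uniformDeviation_sub_integral_ge_le hmeas hbound hN hδ.1 hδ.2.le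
    _ = P Eᶜ := ofReal_measureReal
    _ ≤ _ := measure_mono hsub
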